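/- Suppose q : ℝ → ℝ^N is a twice continuously differentiable solution of the closed-loop system ρ·q̈ + (C + U·C̃)·q̇ + K·q = 0 with the semi-active damper feedback U(t) = u_max·s(t)/√(1 + s(t)²), s(t) = q̇(t)ᵀC̃q̇(t). Then q(t) → 0 and q̇(t) → 0 as t → ∞, and |U(t)| ≤ u_max for all t. -/

import Mathlib

/-!
The energy `E = ρ/2 |q̇|² + 1/2 qᵀKq` decreases at the rate `q̇ᵀCq̇ + s U ≥ 0`, so the
state `(q, q̇)` stays in a compact sublevel set of `E` and `E(t)` converges. The state solves an
autonomous ODE with continuous vector field, so every continuous function of it is uniformly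
continuous in time, and Barbalat's lemma applies: first to `E`, giving that the dissipation tends
to `0`, which forces `q̇ → 0`; then to `q̇`, giving `q̈ → 0`. On the compact sublevel set,
vanishing dissipation and acceleration only happen at the origin, hence `q → 0`. Finally
`|U| ≤ u_max` because `|s| ≤ √(1 + s²)`.
-/

open Matrix Filter Set Topology

theorem tendsto_deriv_zero_of_uniformContinuousOn {E : Type*} [NormedAddCommGroup E]
    [NormedSpace ℝ E] {f f' : ℝ → E} {T : ℝ} {L : E}
    (hf : ∀ t ≥ T, HasDerivAt f (f' t) t) (hlim : Tendsto f atTop (𝓝 L))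
    (huc : UniformContinuousOn f' (Ici T)) : Tendsto f' atTop (𝓝 0) := by
  rw [Metric.tendsto_atTop]
  intro ε hε
  obtain ⟨δ, hδ, hf'δ⟩ := Metric.uniformContinuousOn_iff.1 huc (ε / 2) (half_pos hε)
  set η := δ / 2 with hη
  have hη0 : 0 < η := half_pos hδ
  have hinc : Tendsto (fun t => f (t + η) - f t) atTop (𝓝 0) := by
    simpa using (hlim.comp (tendsto_atTop_add_const_right _ η tendsto_id)).sub hlim
  obtain ⟨T₁, hT₁⟩ := Metric.tendsto_atTop.1 hinc (η * (ε / 2)) (by positivity)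
  refine ⟨max T T₁, fun t ht => ?_⟩
  have htT : T ≤ t := le_of_max_le_left ht
  -- mean value theorem for `u ↦ f u - u • f' t`, whose derivative is `ε / 2`-small on `[t, t + η]`
  have hmvt : ‖f (t + η) - f t - η • f' t‖ ≤ ε / 2 * η := by
    have h := norm_image_sub_le_of_norm_deriv_le_segment' (f := fun u => f u - u • f' t)
      (f' := fun u => f' u - f' t) (C := ε / 2)
      (fun u hu => ((hf u (htT.trans hu.1)).sub ((hasDerivAt_id u).smul_const (f' t))).congr_deriv
        (by simp) |>.hasDerivWithinAt)
      (fun u hu => by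
        rw [← dist_eq_norm]
        refine (hf'δ u (htT.trans hu.1) t htT ?_).le
        rw [Real.dist_eq, abs_of_nonneg (sub_nonneg.2 hu.1)]
        linarith [hu.2])
      (t + η) (right_mem_Icc.2 (by linarith))
    convert h using 2
    · simp only [add_smul]; abel
    · ring
  have hsmall : ‖f (t + η) - f t‖ < η * (ε / 2) := by
    simpa using hT₁ t (le_of_max_le_right ht)
  have hscaled : η * ‖f' t‖ < η * ε := by
    calc η * ‖f' t‖ = ‖(f (t + η) - f t) - (f (t + η) - f t - η • f' t)‖ := by
          rw [sub_sub_cancel, norm_smul, Real.norm_of_nonneg hη0.le]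
      _ ≤ ‖f (t + η) - f t‖ + ‖f (t + η) - f t - η • f' t‖ := norm_sub_le _ _
      _ < η * ε := by linarith
  rw [dist_zero_right]
  exact lt_of_mul_lt_mul_left hscaled hη0.le

theorem uniformContinuousOn_comp_of_hasDerivAt {E F : Type*} [NormedAddCommGroup E]
    [NormedSpace ℝ E] [UniformSpace F] {x : ℝ → E} {G : E → E} {S : Set E} {T : ℝ}
    (hx : ∀ t ≥ T, HasDerivAt x (G (x t)) t) (hS : IsCompact S) (hxS : ∀ t ≥ T, x t ∈ S)
    (hG : ContinuousOn G S) {Φ : E → F} (hΦ : ContinuousOn Φ S) :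
    UniformContinuousOn (Φ ∘ x) (Ici T) := by
  obtain ⟨M, hM⟩ := hS.exists_bound_of_continuousOn hG
  have hlip : LipschitzOnWith M.toNNReal x (Ici T) :=
    (convex_Ici T).lipschitzOnWith_of_nnnorm_hasDerivWithin_le
      (fun t ht => (hx t ht).hasDerivWithinAt) fun t ht => by
        rw [← NNReal.coe_le_coe, coe_nnnorm, Real.coe_toNNReal']
        exact (hM _ (hxS t ht)).trans (le_max_left _ _)
  exact (hS.uniformContinuousOn_of_continuous hΦ).comp hlip.uniformContinuousOn
    fun t ht => hxS t ht

theorem tendsto_of_isCompact_of_tendsto_zero {X Y α : Type*} [TopologicalSpace X]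
    [PseudoMetricSpace Y] {l : Filter α} {S : Set X} (hS : IsCompact S) {Φ : X → ℝ} {f : X → Y}
    {y₀ : Y} (hΦ : Continuous Φ) (hf : Continuous f) (hzero : ∀ p ∈ S, Φ p = 0 → f p = y₀)
    {x : α → X} (hxS : ∀ᶠ a in l, x a ∈ S) (hΦx : Tendsto (fun a => Φ (x a)) l (𝓝 0)) :
    Tendsto (fun a => f (x a)) l (𝓝 y₀) := by
  rw [Metric.tendsto_nhds]
  intro ε hε
  set S' := S ∩ {p | ε ≤ dist (f p) y₀}
  have hS' : IsCompact S' :=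
    hS.inter_right (isClosed_le continuous_const (hf.dist continuous_const))
  rcases S'.eq_empty_or_nonempty with hempty | hne
  · filter_upwards [hxS] with a ha
    by_contra! h
    exact hempty.subset ⟨ha, h⟩
  -- `|Φ|` has a positive minimum on the part of `S` where `f` stays `ε`-away from `y₀`
  obtain ⟨p, hp, hmin⟩ := hS'.exists_isMinOn hne (continuous_abs.comp hΦ).continuousOn
  have hpos : 0 < |Φ p| := abs_pos.2 fun h => by
    have := hp.2
    rw [Set.mem_ofPred_eq, hzero p hp.1 h, dist_self] at this
    linarith
  filter_upwards [hxS, Metric.tendsto_nhds.1 hΦx _ hpos] with a ha hsmall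
  by_contra! h
  have := hmin ⟨ha, h⟩
  rw [Real.dist_eq, sub_zero] at hsmall
  exact absurd this (not_le.2 hsmall)

theorem exists_pos_mul_norm_sq_le {E : Type*} [NormedAddCommGroup E] [NormedSpace ℝ E]
    [FiniteDimensional ℝ E] {f : E → ℝ} (hf : Continuous f)
    (hsmul : ∀ (c : ℝ) (x : E), f (c • x) = c ^ 2 * f x) (hpos : ∀ x ≠ 0, 0 < f x) :
    ∃ m > 0, ∀ x, m * ‖x‖ ^ 2 ≤ f x := by
  rcases subsingleton_or_nontrivial E with hE | hE
  · refine ⟨1, one_pos, fun x => ?_⟩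
    rw [Subsingleton.elim x 0, norm_zero]
    simpa using (hsmul 0 0).ge
  obtain ⟨z, hz, hmin⟩ := (isCompact_sphere (0 : E) 1).exists_isMinOn
    (NormedSpace.sphere_nonempty.2 zero_le_one) hf.continuousOn
  have hz1 : ‖z‖ = 1 := by simpa using hz
  refine ⟨f z, hpos z (norm_ne_zero_iff.1 (by rw [hz1]; exact one_ne_zero)), fun x => ?_⟩
  rcases eq_or_ne x 0 with rfl | hx
  · simpa using (hsmul 0 0).ge
  have hnx : 0 < ‖x‖ := norm_pos_iff.2 hx
  have hx1 : ‖x‖⁻¹ • x ∈ Metric.sphere (0 : E) 1 := by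
    simp [norm_smul, hnx.ne']
  calc f z * ‖x‖ ^ 2 ≤ f (‖x‖⁻¹ • x) * ‖x‖ ^ 2 := by gcongr; exact hmin hx1
    _ = f x := by rw [hsmul, inv_pow]; field_simp

theorem HasDerivAt.dotProduct {𝕜 n : Type*} [NontriviallyNormedField 𝕜] [Fintype n]
    {x y : 𝕜 → n → 𝕜} {x' y' : n → 𝕜} {t : 𝕜} (hx : HasDerivAt x x' t) (hy : HasDerivAt y y' t) :
    HasDerivAt (fun u => x u ⬝ᵥ y u) (x' ⬝ᵥ y t + x t ⬝ᵥ y') t := by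
  have h := HasDerivAt.fun_sum (u := Finset.univ)
    fun i _ => (hasDerivAt_pi.1 hx i).mul (hasDerivAt_pi.1 hy i)
  rwa [Finset.sum_add_distrib] at h

theorem HasDerivAt.matrix_mulVec {𝕜 n : Type*} [NontriviallyNormedField 𝕜] [Fintype n]
    (M : Matrix n n 𝕜) {x : 𝕜 → n → 𝕜} {x' : n → 𝕜} {t : 𝕜} (hx : HasDerivAt x x' t) :
    HasDerivAt (fun u => M *ᵥ x u) (M *ᵥ x') t :=
  hasDerivAt_pi.2 fun i => by simpa [mulVec] using (hasDerivAt_const t (M i)).dotProduct hx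

noncomputable section

def damperFeedback (u_max s : ℝ) : ℝ := u_max * s / √(1 + s ^ 2)

theorem abs_damperFeedback_le {u_max : ℝ} (hu : 0 ≤ u_max) (s : ℝ) :
    |damperFeedback u_max s| ≤ u_max := by
  have hr : 0 < √(1 + s ^ 2) := Real.sqrt_pos.2 (by positivity)
  rw [damperFeedback, abs_div, abs_mul, abs_of_nonneg hu, abs_of_pos hr, div_le_iff₀ hr]
  exact mul_le_mul_of_nonneg_left (Real.abs_le_sqrt (by linarith)) hu

@[fun_prop]
theorem continuous_damperFeedback (u_max : ℝ) : Continuous (damperFeedback u_max) :=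
  (continuous_const.mul continuous_id).div (by fun_prop)
    fun s => (Real.sqrt_pos.2 (by positivity)).ne'

theorem self_mul_damperFeedback (u_max s : ℝ) :
    s * damperFeedback u_max s = u_max * s ^ 2 / √(1 + s ^ 2) := by
  rw [damperFeedback]; ring

variable {n : Type*} [Fintype n]

/-- The acceleration `q̈` solved from the closed-loop equation, as a function of the state
`p = (q, q̇)`. -/
def swayAccel (ρ u_max : ℝ) (C Ct K : Matrix n n ℝ) (p : (n → ℝ) × (n → ℝ)) : n → ℝ :=
  -ρ⁻¹ • (C *ᵥ p.2 + damperFeedback u_max (p.2 ⬝ᵥ Ct *ᵥ p.2) • Ct *ᵥ p.2 + K *ᵥ p.1)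

def swayEnergy (ρ : ℝ) (K : Matrix n n ℝ) (p : (n → ℝ) × (n → ℝ)) : ℝ :=
  ρ / 2 * (p.2 ⬝ᵥ p.2) + 1 / 2 * (p.1 ⬝ᵥ K *ᵥ p.1)

def swayDissipation (u_max : ℝ) (C Ct : Matrix n n ℝ) (v : n → ℝ) : ℝ :=
  v ⬝ᵥ C *ᵥ v + (v ⬝ᵥ Ct *ᵥ v) * damperFeedback u_max (v ⬝ᵥ Ct *ᵥ v)

theorem continuous_swayAccel (ρ u_max : ℝ) (C Ct K : Matrix n n ℝ) :
    Continuous (swayAccel ρ u_max C Ct K) := by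
  unfold swayAccel; fun_prop

theorem continuous_swayEnergy (ρ : ℝ) (K : Matrix n n ℝ) : Continuous (swayEnergy ρ K) := by
  unfold swayEnergy; fun_prop

theorem continuous_swayDissipation (u_max : ℝ) (C Ct : Matrix n n ℝ) :
    Continuous (swayDissipation u_max C Ct) := by
  unfold swayDissipation; fun_prop

theorem swayDissipation_nonneg {u_max : ℝ} {C : Matrix n n ℝ} (Ct : Matrix n n ℝ)
    (hu : 0 ≤ u_max) (hC : C.PosSemidef) (v : n → ℝ) : 0 ≤ swayDissipation u_max C Ct v := by
  have hCv : 0 ≤ v ⬝ᵥ C *ᵥ v := by simpa using hC.dotProduct_mulVec_nonneg v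
  rw [swayDissipation, self_mul_damperFeedback]
  positivity

theorem eq_zero_of_swayDissipation_eq_zero {u_max : ℝ} {C Ct : Matrix n n ℝ}
    (hu : 0 < u_max) (hC : C.PosSemidef) (hCt : Ct.PosDef) {v : n → ℝ}
    (hv : swayDissipation u_max C Ct v = 0) : v = 0 := by
  by_contra hv0
  have hCv : 0 ≤ v ⬝ᵥ C *ᵥ v := by simpa using hC.dotProduct_mulVec_nonneg v
  have hs : 0 < v ⬝ᵥ Ct *ᵥ v := by simpa using hCt.dotProduct_mulVec_pos hv0
  rw [swayDissipation, self_mul_damperFeedback] at hv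
  have : 0 < u_max * (v ⬝ᵥ Ct *ᵥ v) ^ 2 / √(1 + (v ⬝ᵥ Ct *ᵥ v) ^ 2) := by positivity
  linarith

theorem swayEnergy_nonneg {ρ : ℝ} {K : Matrix n n ℝ} (hρ : 0 ≤ ρ) (hK : K.PosSemidef)
    (p : (n → ℝ) × (n → ℝ)) : 0 ≤ swayEnergy ρ K p := by
  have hKq : 0 ≤ p.1 ⬝ᵥ K *ᵥ p.1 := by simpa using hK.dotProduct_mulVec_nonneg p.1
  have hv : 0 ≤ p.2 ⬝ᵥ p.2 := by simpa using dotProduct_star_self_nonneg p.2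
  rw [swayEnergy]
  positivity

theorem swayEnergy_smul (ρ : ℝ) (K : Matrix n n ℝ) (c : ℝ) (p : (n → ℝ) × (n → ℝ)) :
    swayEnergy ρ K (c • p) = c ^ 2 * swayEnergy ρ K p := by
  simp only [swayEnergy, Prod.smul_fst, Prod.smul_snd, mulVec_smul, smul_dotProduct,
    dotProduct_smul, smul_eq_mul]
  ring

theorem swayEnergy_pos {ρ : ℝ} {K : Matrix n n ℝ} (hρ : 0 < ρ) (hK : K.PosDef)
    {p : (n → ℝ) × (n → ℝ)} (hp : p ≠ 0) : 0 < swayEnergy ρ K p := by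
  have hKq : 0 ≤ p.1 ⬝ᵥ K *ᵥ p.1 := by simpa using hK.posSemidef.dotProduct_mulVec_nonneg p.1
  have hv : 0 ≤ p.2 ⬝ᵥ p.2 := by simpa using dotProduct_star_self_nonneg p.2
  rw [swayEnergy]
  rcases eq_or_ne p.1 0 with hq | hq
  · have hv0 : p.2 ≠ 0 := fun h => hp (Prod.ext hq h)
    have : 0 < p.2 ⬝ᵥ p.2 := by simpa using dotProduct_self_star_pos_iff.2 hv0
    positivity
  · have : 0 < p.1 ⬝ᵥ K *ᵥ p.1 := by simpa using hK.dotProduct_mulVec_pos hq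
    positivity

theorem isCompact_swayEnergy_le {ρ : ℝ} {K : Matrix n n ℝ} (hρ : 0 < ρ) (hK : K.PosDef) (e : ℝ) :
    IsCompact {p | swayEnergy ρ K p ≤ e} := by
  obtain ⟨m, hm, hmE⟩ := exists_pos_mul_norm_sq_le (continuous_swayEnergy ρ K)
    (swayEnergy_smul ρ K) fun p hp => swayEnergy_pos hρ hK hp
  refine Metric.isCompact_of_isClosed_isBounded
    (isClosed_le (continuous_swayEnergy ρ K) continuous_const)
    ((Metric.isBounded_closedBall (x := 0) (r := √(e / m))).subset fun p hp => ?_)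
  rw [mem_closedBall_zero_iff, ← abs_norm]
  exact Real.abs_le_sqrt (by rw [le_div_iff₀ hm, mul_comm]; exact (hmE p).trans hp)

theorem hasDerivAt_swayEnergy {ρ u_max : ℝ} {C Ct K : Matrix n n ℝ} (hρ : ρ ≠ 0)
    (hK : K.IsHermitian) {q v : ℝ → n → ℝ} {t : ℝ} (hq : HasDerivAt q (v t) t)
    (hv : HasDerivAt v (swayAccel ρ u_max C Ct K (q t, v t)) t) :
    HasDerivAt (fun t => swayEnergy ρ K (q t, v t)) (-swayDissipation u_max C Ct (v t)) t := by
  have hKsymm : v t ⬝ᵥ K *ᵥ q t = q t ⬝ᵥ K *ᵥ v t := by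
    rw [dotProduct_mulVec, ← mulVec_transpose, dotProduct_comm,
      ← conjTranspose_eq_transpose_of_trivial, hK.eq]
  refine (((hv.dotProduct hv).const_mul (ρ / 2)).fun_add
    ((hq.dotProduct (hq.matrix_mulVec K)).const_mul (1 / 2))).congr_deriv ?_
  simp only [swayAccel, swayDissipation, dotProduct_smul, dotProduct_add, smul_eq_mul,
    dotProduct_comm _ (v t), hKsymm]
  field_simp
  ring

theorem eq_swayAccel {ρ u_max : ℝ} {C Ct K : Matrix n n ℝ} (hρ : ρ ≠ 0) {q v a : n → ℝ}
    (h : ρ • a + C *ᵥ v + damperFeedback u_max (v ⬝ᵥ Ct *ᵥ v) • Ct *ᵥ v + K *ᵥ q = 0) :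
    a = swayAccel ρ u_max C Ct K (q, v) := by
  have h' : ρ • a + (C *ᵥ v + damperFeedback u_max (v ⬝ᵥ Ct *ᵥ v) • Ct *ᵥ v + K *ᵥ q) = 0 := by
    rw [← h]; abel
  rw [swayAccel, eq_neg_of_add_eq_zero_right h', smul_neg, neg_smul, neg_neg, smul_smul,
    inv_mul_cancel₀ hρ, one_smul]

theorem eq_zero_of_swayDissipation_eq_zero_of_swayAccel_eq_zero {ρ u_max : ℝ}
    {C Ct K : Matrix n n ℝ} (hρ : ρ ≠ 0) (hu : 0 < u_max) (hC : C.PosSemidef) (hCt : Ct.PosDef)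
    (hK : K.PosDef) {p : (n → ℝ) × (n → ℝ)} (hD : swayDissipation u_max C Ct p.2 = 0)
    (ha : swayAccel ρ u_max C Ct K p = 0) : p = 0 := by
  have hv : p.2 = 0 := eq_zero_of_swayDissipation_eq_zero hu hC hCt hD
  refine Prod.ext (by_contra fun hq => ?_) hv
  simp only [swayAccel, hv, mulVec_zero, smul_zero, add_zero, zero_add, smul_eq_zero,
    neg_eq_zero, inv_eq_zero, hρ, false_or] at ha
  simpa [ha] using hK.dotProduct_mulVec_pos hq

theorem tendsto_sway_zero {ρ u_max : ℝ} {C Ct K : Matrix n n ℝ} (hρ : 0 < ρ) (hu : 0 < u_max)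
    (hC : C.PosSemidef) (hCt : Ct.PosDef) (hK : K.PosDef) {q v : ℝ → n → ℝ}
    (hq : ∀ t, HasDerivAt q (v t) t)
    (hv : ∀ t, HasDerivAt v (swayAccel ρ u_max C Ct K (q t, v t)) t) :
    Tendsto (fun t => (q t, v t)) atTop (𝓝 0) := by
  set x : ℝ → (n → ℝ) × (n → ℝ) := fun t => (q t, v t)
  set E := swayEnergy ρ K
  set D := swayDissipation u_max C Ct
  set a := swayAccel ρ u_max C Ct K
  have hE (t : ℝ) : HasDerivAt (fun t => E (x t)) (-D (v t)) t :=
    hasDerivAt_swayEnergy hρ.ne' hK.isHermitian (hq t) (hv t)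
  have hanti : Antitone fun t => E (x t) :=
    antitone_of_hasDerivAt_nonpos hE fun t => neg_nonpos.2 (swayDissipation_nonneg Ct hu.le hC _)
  -- the energy sublevel set through `x 0` is compact and forward invariant
  set S := {p | E p ≤ E (x 0)}
  have hS : IsCompact S := isCompact_swayEnergy_le hρ hK _
  have hxS (t : ℝ) (ht : t ≥ 0) : x t ∈ S := hanti ht
  have hxS' : ∀ᶠ t in atTop, x t ∈ S := eventually_atTop.2 ⟨0, hxS⟩
  have hx (t : ℝ) (_ : t ≥ 0) : HasDerivAt x ((x t).2, a (x t)) t := (hq t).prodMk (hv t)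
  have hfield : ContinuousOn (fun p => (p.2, a p)) S :=
    (continuous_snd.prodMk (continuous_swayAccel ρ u_max C Ct K)).continuousOn
  have hD : Tendsto (fun t => D (v t)) atTop (𝓝 0) := by
    have hEconv : Tendsto (fun t => E (x t)) atTop (𝓝 (⨅ t, E (x t))) :=
      tendsto_atTop_ciInf hanti
        ⟨0, by rintro _ ⟨t, rfl⟩; exact swayEnergy_nonneg hρ.le hK.posSemidef _⟩
    have huc : UniformContinuousOn ((fun p => -D p.2) ∘ x) (Ici 0) :=
      uniformContinuousOn_comp_of_hasDerivAt hx hS hxS hfield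
        ((continuous_swayDissipation u_max C Ct).comp continuous_snd).neg.continuousOn
    simpa using (tendsto_deriv_zero_of_uniformContinuousOn (fun t _ => hE t) hEconv huc).neg
  have hv0 : Tendsto v atTop (𝓝 0) :=
    tendsto_of_isCompact_of_tendsto_zero hS ((continuous_swayDissipation u_max C Ct).comp
      continuous_snd) continuous_snd (fun p _ hp => eq_zero_of_swayDissipation_eq_zero hu hC hCt hp)
      hxS' hD
  have ha0 : Tendsto (fun t => a (x t)) atTop (𝓝 0) :=
    tendsto_deriv_zero_of_uniformContinuousOn (fun t _ => hv t) hv0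
      (uniformContinuousOn_comp_of_hasDerivAt hx hS hxS hfield
        (continuous_swayAccel ρ u_max C Ct K).continuousOn)
  refine tendsto_of_isCompact_of_tendsto_zero hS (Φ := fun p => D p.2 + ‖a p‖)
    (((continuous_swayDissipation u_max C Ct).comp continuous_snd).add
      (continuous_swayAccel ρ u_max C Ct K).norm) continuous_id (fun p _ hp => ?_) hxS'
    (by simpa using hD.add ha0.norm)
  obtain ⟨hDp, hap⟩ :=
    (add_eq_zero_iff_of_nonneg (swayDissipation_nonneg Ct hu.le hC p.2) (norm_nonneg _)).1 hp
  exact eq_zero_of_swayDissipation_eq_zero_of_swayAccel_eq_zero hρ.ne' hu hC hCt hK hDp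
    (norm_eq_zero.1 hap)

end

theorem stmt_0_general (N : ℕ) (ρ u_max : ℝ) (hρ : 0 < ρ) (hu : 0 < u_max)
    (C Ct K : Matrix (Fin N) (Fin N) ℝ)
    (hC : C.PosSemidef) (hCt : Ct.PosDef) (hK : K.PosDef)
    (q : ℝ → Fin N → ℝ) (hq : ContDiff ℝ 2 q)
    (U : ℝ → ℝ)
    (hU : ∀ t, U t = u_max * (deriv q t ⬝ᵥ Ct.mulVec (deriv q t)) /
        Real.sqrt (1 + (deriv q t ⬝ᵥ Ct.mulVec (deriv q t)) ^ 2))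
    (hode : ∀ t, ρ • deriv (deriv q) t + C.mulVec (deriv q t)
        + U t • Ct.mulVec (deriv q t) + K.mulVec (q t) = 0) :
    Tendsto q atTop (nhds 0) ∧ Tendsto (deriv q) atTop (nhds 0) ∧
      ∀ t, |U t| ≤ u_max := by
  have hq' (t : ℝ) : HasDerivAt q (deriv q t) t :=
    (hq.differentiable (by norm_num) t).hasDerivAt
  have hv' (t : ℝ) : HasDerivAt (deriv q) (swayAccel ρ u_max C Ct K (q t, deriv q t)) t := by
    have hacc : deriv (deriv q) t = swayAccel ρ u_max C Ct K (q t, deriv q t) :=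
      eq_swayAccel hρ.ne' (by rw [damperFeedback, ← hU t]; exact hode t)
    exact hacc ▸ ((hq.deriv' (n := 1)).differentiable one_ne_zero t).hasDerivAt
  obtain ⟨hq0, hv0⟩ := (Prod.tendsto_iff _ _).1 (tendsto_sway_zero hρ hu hC hCt hK hq' hv')
  refine ⟨hq0, hv0, fun t => ?_⟩
  rw [hU t]
  exact abs_damperFeedback_le hu.le _

/-- Static-car, disturbance-free closed-loop elevator rope sway model
with the semi-active damper feedback `U t = u_max * s t / √(1 + (s t)^2)`,
`s t = q̇(t)ᵀ C̃ q̇(t)`: every twice continuously differentiable solution satisfies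
`q(t) → 0`, `q̇(t) → 0` as `t → ∞`, and `|U t| ≤ u_max` for all `t`. -/
theorem stmt_0 (N : ℕ) (hN : 1 ≤ N) (ρ u_max : ℝ) (hρ : 0 < ρ) (hu : 0 < u_max)
    (C Ct K : Matrix (Fin N) (Fin N) ℝ)
    (hC : C.PosSemidef) (hCt : Ct.PosDef) (hK : K.PosDef)
    (q : ℝ → Fin N → ℝ) (hq : ContDiff ℝ 2 q)
    (U : ℝ → ℝ)
    (hU : ∀ t, U t = u_max * (deriv q t ⬝ᵥ Ct.mulVec (deriv q t)) /
        Real.sqrt (1 + (deriv q t ⬝ᵥ Ct.mulVec (deriv q t)) ^ 2))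
    (hode : ∀ t, ρ • deriv (deriv q) t + C.mulVec (deriv q t)
        + U t • Ct.mulVec (deriv q t) + K.mulVec (q t) = 0) :
    Tendsto q atTop (nhds 0) ∧ Tendsto (deriv q) atTop (nhds 0) ∧
      ∀ t, |U t| ≤ u_max :=
  stmt_0_general N ρ u_max hρ hu C Ct K hC hCt hK q hq U hU hode
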